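/- For every natural number k, the (k+1)×(k+1) complex matrix P^(k) with entries p^k_{rs} (0 ≤ r, s ≤ k) is invertible, and its inverse has entries q^k_{rs} = 2^k · i^{r+s} · p^k_{rs}; equivalently, for all 0 ≤ r, s ≤ k one has Σ_{q=0}^{k} p^k_{rq} · (2^k · i^{q+s} · p^k_{qs}) = 1 if r = s and 0 otherwise. -/

import Mathlib

/-!
Up to the diagonal factors `(-1)^(k-r) r! (k-r)!` and `i^s / (2^k s! (k-s)!)` and a reversal of
both indices, `P^(k)` is the matrix of `f ↦ (1 + X)^k f((1 - X)/(1 + X))` on polynomials of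
degree `≤ k`. On homogenizations this map is the linear substitution `(x, y) ↦ (y - x, y + x)`,
whose square is multiplication by `2`, so the matrix squares to `2^k`. The diagonal factors then
cancel against the weights `2^k i^(r+s)` of the claimed inverse.
-/

/-- The coefficient `p^k_{rs}` expressing complex jet variables via real ones. -/
noncomputable def pcoef (k r s : ℕ) : ℂ :=
  (-1) ^ (k - r) *
    ((r.factorial * (k - r).factorial : ℂ) / ((2 : ℂ) ^ k * (s.factorial * (k - s).factorial))) *
    Complex.I ^ s *
    ∑ α ∈ Finset.Icc (k - r - s) (min (k - r) (k - s)),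
      (-1) ^ α * ((k - s).choose α : ℂ) * ((s.choose (k - r - α)) : ℂ)

open Finset

namespace Polynomial

section CommSemiring

variable {R : Type*} [CommSemiring R]

theorem aeval_homogenize_eq_sum {A : Type*} [CommSemiring A] [Algebra R A] (p : R[X]) (n : ℕ)
    (x : Fin 2 → A) :
    MvPolynomial.aeval x (p.homogenize n) =
      ∑ q ∈ range (n + 1), algebraMap R A (p.coeff q) * x 0 ^ q * x 1 ^ (n - q) := by
  simp [homogenize, Nat.sum_antidiagonal_eq_sum_range_succ_mk, MvPolynomial.aeval_monomial,
    Finsupp.prod_fintype, mul_assoc]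

theorem homogenize_pow {p : R[X]} {d : ℕ} (hp : p.natDegree ≤ d) (j : ℕ) :
    (p ^ j).homogenize (j * d) = p.homogenize d ^ j := by
  induction j with
  | zero => simp
  | succ j ih =>
    rw [pow_succ, pow_succ, add_one_mul, homogenize_mul _ _ (natDegree_pow_le_of_le j hp) hp, ih]

end CommSemiring

variable {R : Type*} [CommRing R]

theorem coeff_one_sub_X_pow (a n : ℕ) :
    ((1 - X : R[X]) ^ a).coeff n = (-1) ^ n * a.choose n := by
  have : (1 - X : R[X]) ^ a = ((1 + X) ^ a).comp (C (-1) * X) := by simp [sub_eq_add_neg]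
  rw [this, comp_C_mul_X_coeff, coeff_one_add_X_pow, mul_comm]

theorem coeff_one_sub_X_pow_mul_one_add_X_pow (a b n : ℕ) :
    ((1 - X : R[X]) ^ a * (1 + X) ^ b).coeff n =
      ∑ i ∈ Icc (n - b) (min a n), (-1) ^ i * (a.choose i : R) * (b.choose (n - i) : R) := by
  simp_rw [coeff_mul, Nat.sum_antidiagonal_eq_sum_range_succ_mk, coeff_one_sub_X_pow,
    coeff_one_add_X_pow]
  refine (sum_subset (fun i hi => ?_) fun i hin hi => ?_).symm
  · simp only [mem_Icc, mem_range] at hi ⊢; omega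
  · simp only [mem_Icc, mem_range, not_and_or, not_le] at hin hi
    rcases hi with hi | hi
    · simp [Nat.choose_eq_zero_of_lt (show b < n - i by omega)]
    · simp [Nat.choose_eq_zero_of_lt (show a < i by omega)]

variable (R) in
/-- `(1 + X)^k c^j` for the Cayley transform `c = (1 - X)/(1 + X)`. -/
noncomputable def cayleyPoly (k j : ℕ) : R[X] :=
  (1 - X) ^ j * (1 + X) ^ (k - j)

theorem homogenize_cayleyPoly {k j : ℕ} (hj : j ≤ k) :
    (cayleyPoly R k j).homogenize k =
      (MvPolynomial.X 1 - MvPolynomial.X 0) ^ j *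
        (MvPolynomial.X 1 + MvPolynomial.X 0) ^ (k - j) := by
  have h₁ : (1 - X : R[X]).natDegree ≤ 1 :=
    (natDegree_sub_le _ _).trans (max_le (by simp) natDegree_X_le)
  have h₂ : (1 + X : R[X]).natDegree ≤ 1 :=
    (natDegree_add_le _ _).trans (max_le (by simp) natDegree_X_le)
  have h := homogenize_mul _ _ (natDegree_pow_le_of_le j h₁) (natDegree_pow_le_of_le (k - j) h₂)
  rw [homogenize_pow h₁, homogenize_pow h₂, mul_one, mul_one, Nat.add_sub_cancel' hj] at h
  rw [cayleyPoly, h]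
  simp [homogenize_X one_ne_zero]

theorem sum_C_coeff_cayleyPoly_mul_cayleyPoly {k j : ℕ} (hj : j ≤ k) :
    ∑ q ∈ range (k + 1), C ((cayleyPoly R k j).coeff q) * cayleyPoly R k q =
      C (2 ^ k) * X ^ j :=
  calc ∑ q ∈ range (k + 1), C ((cayleyPoly R k j).coeff q) * cayleyPoly R k q
      = MvPolynomial.aeval ![1 - X, 1 + X] ((cayleyPoly R k j).homogenize k) := by
        simp [aeval_homogenize_eq_sum, cayleyPoly, mul_assoc]
    _ = (2 * X) ^ j * 2 ^ (k - j) := by simp [homogenize_cayleyPoly hj]; ring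
    _ = C (2 ^ k) * X ^ j := by
        rw [mul_pow, mul_right_comm, ← pow_add, Nat.add_sub_cancel' hj, C_pow, C_ofNat]

theorem sum_coeff_cayleyPoly_mul_coeff_cayleyPoly {k i j : ℕ} (hj : j ≤ k) :
    ∑ q ∈ range (k + 1), (cayleyPoly R k q).coeff i * (cayleyPoly R k j).coeff q =
      if i = j then 2 ^ k else 0 := by
  have h := congrArg (coeff · i) (sum_C_coeff_cayleyPoly_mul_cayleyPoly (R := R) hj)
  simp only [finsetSum_coeff, coeff_C_mul, coeff_X_pow, mul_ite, mul_one, mul_zero] at h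
  simp_rw [mul_comm ((cayleyPoly R k _).coeff i), h]

end Polynomial

open Polynomial Complex Matrix Nat

section CayleyMatrix

variable {R : Type*} [CommRing R]

variable (R) in
noncomputable def cayleyMatrix (k : ℕ) : Matrix (Fin (k + 1)) (Fin (k + 1)) R :=
  Matrix.of fun i j => (cayleyPoly R k j).coeff i

theorem cayleyMatrix_mul_self (k : ℕ) :
    cayleyMatrix R k * cayleyMatrix R k = (2 ^ k : R) • 1 := by
  ext i j
  simp only [mul_apply, cayleyMatrix, of_apply]
  rw [Fin.sum_univ_eq_sum_range (fun q => (cayleyPoly R k q).coeff i * (cayleyPoly R k j).coeff q),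
    sum_coeff_cayleyPoly_mul_coeff_cayleyPoly j.is_le]
  simp [one_apply, Fin.val_inj]

theorem cayleyMatrix_submatrix_rev_mul_self (k : ℕ) :
    (cayleyMatrix R k).submatrix Fin.rev Fin.rev * (cayleyMatrix R k).submatrix Fin.rev Fin.rev =
      (2 ^ k : R) • 1 := by
  rw [← submatrix_mul _ _ _ _ _ Fin.rev_bijective, cayleyMatrix_mul_self]
  ext i j
  simp [one_apply]

end CayleyMatrix

noncomputable def pcoefLeftFactor (k r : ℕ) : ℂ := (-1) ^ (k - r) * (r ! * (k - r)! : ℂ)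

noncomputable def pcoefRightFactor (k s : ℕ) : ℂ := I ^ s / (2 ^ k * (s ! * (k - s)! : ℂ))

theorem pcoef_eq_mul_coeff_cayleyPoly {k s : ℕ} (r : ℕ) (hs : s ≤ k) :
    pcoef k r s =
      pcoefLeftFactor k r * (cayleyPoly ℂ k (k - s)).coeff (k - r) * pcoefRightFactor k s := by
  rw [pcoef, cayleyPoly, Nat.sub_sub_self hs, coeff_one_sub_X_pow_mul_one_add_X_pow, min_comm,
    pcoefLeftFactor, pcoefRightFactor]
  ring

theorem two_pow_mul_pcoefRightFactor_mul_pcoefLeftFactor {k q : ℕ} (hq : q ≤ k) :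
    2 ^ k * (pcoefRightFactor k q * I ^ q * pcoefLeftFactor k q) = (-1) ^ k := by
  obtain ⟨m, rfl⟩ := Nat.exists_eq_add_of_le hq
  have hqfac : (q ! : ℂ) ≠ 0 := by exact_mod_cast q.factorial_ne_zero
  have hmfac : (m ! : ℂ) ≠ 0 := by exact_mod_cast m.factorial_ne_zero
  have hI : I ^ q * I ^ q = (-1) ^ q := by rw [← mul_pow, I_mul_I]
  rw [pcoefRightFactor, pcoefLeftFactor, Nat.add_sub_cancel_left, pow_add (-1 : ℂ), ← hI]
  field_simp

theorem of_pcoef_eq_diagonal_mul_mul_diagonal (k : ℕ) :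
    Matrix.of (fun r s : Fin (k + 1) => pcoef k r s) =
      diagonal (fun r : Fin (k + 1) => pcoefLeftFactor k r) *
        (cayleyMatrix ℂ k).submatrix Fin.rev Fin.rev *
          diagonal (fun s : Fin (k + 1) => pcoefRightFactor k s) := by
  ext r s
  simp [cayleyMatrix, pcoef_eq_mul_coeff_cayleyPoly r s.is_le]

/-- The matrix `P^(k) = (p^k_{rs})` is invertible and its inverse has entries
`q^k_{rs} = 2^k i^{r+s} p^k_{rs}`. -/
theorem pcoef_matrix_invertible (k : ℕ) :
    (Matrix.of fun r s : Fin (k + 1) => pcoef k r s) *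
        (Matrix.of fun r s : Fin (k + 1) =>
          (2 : ℂ) ^ k * Complex.I ^ ((r : ℕ) + (s : ℕ)) * pcoef k r s) = 1 ∧
    (Matrix.of fun r s : Fin (k + 1) =>
          (2 : ℂ) ^ k * Complex.I ^ ((r : ℕ) + (s : ℕ)) * pcoef k r s) *
        (Matrix.of fun r s : Fin (k + 1) => pcoef k r s) = 1 := by
  set D := diagonal fun r : Fin (k + 1) => pcoefLeftFactor k r
  set E := diagonal fun s : Fin (k + 1) => pcoefRightFactor k s
  set V := diagonal fun s : Fin (k + 1) => I ^ (s : ℕ)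
  set M := (cayleyMatrix ℂ k).submatrix Fin.rev Fin.rev
  have hQ : (Matrix.of fun r s : Fin (k + 1) => 2 ^ k * I ^ ((r : ℕ) + (s : ℕ)) * pcoef k r s) =
      (2 ^ k : ℂ) • (V * (D * M * E) * V) := by
    rw [← of_pcoef_eq_diagonal_mul_mul_diagonal]; ext r s; simp [V, pow_add]; ring
  have hM : M * M = (2 ^ k : ℂ) • 1 := cayleyMatrix_submatrix_rev_mul_self k
  have hEVD : (2 ^ k : ℂ) • (E * V * D) = ((-1) ^ k : ℂ) • 1 := by
    rw [diagonal_mul_diagonal, diagonal_mul_diagonal, ← diagonal_smul, smul_one_eq_diagonal]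
    exact congrArg diagonal
      (funext fun q => two_pow_mul_pcoefRightFactor_mul_pcoefLeftFactor q.is_le)
  have hPQ : (D * M * E) * ((2 ^ k : ℂ) • (V * (D * M * E) * V)) = 1 :=
    calc (D * M * E) * ((2 ^ k : ℂ) • (V * (D * M * E) * V))
        = D * M * ((2 ^ k : ℂ) • (E * V * D)) * M * (E * V) := by
          simp only [Matrix.mul_assoc, Matrix.mul_smul, Matrix.smul_mul]
      _ = ((-1) ^ k : ℂ) • (D * (M * M) * (E * V)) := by
          rw [hEVD]; simp only [Matrix.mul_assoc, Matrix.mul_smul, Matrix.smul_mul, Matrix.mul_one]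
      _ = ((-1) ^ k : ℂ) • ((2 ^ k : ℂ) • (E * V * D)) := by
          rw [hM, Matrix.mul_smul, Matrix.smul_mul, Matrix.mul_one]
          simp only [E, V, D, diagonal_mul_diagonal, mul_comm (pcoefLeftFactor k _)]
      _ = 1 := by rw [hEVD, smul_smul, ← mul_pow]; simp
  rw [of_pcoef_eq_diagonal_mul_mul_diagonal, hQ]
  exact ⟨hPQ, mul_eq_one_comm.mp hPQ⟩
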